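/- Let n ≥ 0 with L(n)∘θ_n > 0 (equivalently n is not a weak ascending ladder time of S). Then T(T^{−1}(n)) = n + τ_{L(n)}∘θ_n, i.e., the first ladder time at or after n equals n plus the first passage time of the shifted walk to level max_{0≤k≤n}S − S(n). -/

import Mathlib

open scoped Classical NNReal
noncomputable section

/-- Finite point measures on `(0,∞)`, modeled as multisets of atoms in `ℝ≥0`. -/
abbrev PtM := Multiset ℝ≥0

/-- A stick: a life-length together with a finite point measure of birth times. -/
abbrev Stick := ℝ≥0 × PtM

/-- The space of doubly infinite sequences of sticks. -/
abbrev Om := ℤ → Stick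

/-- The shift operator `θ_n`. -/
def theta (n : ℤ) (ω : Om) : Om := fun k => ω (n + k)

/-- The dual (time-reversal) operator `ϑ^n`. -/
def dual (n : ℤ) (ω : Om) : Om := fun k => ω (n - k - 1)

/-- Life length of the `k`-th individual. -/
def Vc (ω : Om) (k : ℤ) : ℝ≥0 := (ω k).1

/-- Point measure (ages at childbearing) of the `k`-th individual. -/
def Pc (ω : Om) (k : ℤ) : PtM := (ω k).2

/-- The Lukasiewicz path `S`. -/
def Sw (ω : Om) (n : ℤ) : ℤ :=
  if 0 ≤ n then ∑ k ∈ Finset.range n.toNat, ((Multiset.card (Pc ω (k : ℤ)) : ℤ) - 1)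
  else - ∑ k ∈ Finset.range (-n).toNat, ((Multiset.card (Pc ω (-(k : ℤ) - 1)) : ℤ) - 1)

/-- `π(ν)`: the supremum of the support (largest atom) of a finite point measure. -/
def piM (ν : PtM) : ℝ≥0 := ν.sup

/-- `Υ_j(ν)`: removes the `j` largest atoms of `ν`. -/
def upsilon (j : ℕ) (ν : PtM) : PtM :=
  ((ν.sort (· ≤ ·)).take (Multiset.card ν - j) : List ℝ≥0)

/-- The map `Φ` driving the spine process dynamics. -/
def phiSp (Y : List PtM) (ν : PtM) : List PtM :=
  if ν = 0 then
    match Y.reverse.dropWhile (fun m => decide (Multiset.card m < 2)) with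
    | [] => []
    | h :: t => (upsilon 1 h :: t).reverse
  else Y ++ [ν]

/-- The spine process `𝕊₀ⁿ`. -/
def spine (ω : Om) : ℕ → List PtM
  | 0 => []
  | n + 1 => phiSp (spine ω n) (Pc ω (n : ℤ))

/-- `π` extended to finite sequences of point measures. -/
def piL (Y : List PtM) : ℝ≥0 := (Y.map piM).sum

/-- The chronological height process `ℍ(n) = π(𝕊₀ⁿ)`. -/
def Hchr (ω : Om) (n : ℕ) : ℝ≥0 := piL (spine ω n)

/-- The genealogical height process
`𝓗(n) = #{k ∈ {0,…,n−1} : S(k+1) ≤ min_{k+1 ≤ j ≤ n} S(j)}`. -/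
def genH (ω : Om) (n : ℕ) : ℕ :=
  ((Finset.range n).filter
    (fun k : ℕ => ∀ j : ℕ, j ∈ Finset.Icc (k + 1) n → Sw ω ((k : ℤ) + 1) ≤ Sw ω (j : ℤ))).card

/-- Weak ascending ladder height times `T(k)` (valued `⊤` if nonexistent). -/
def ladderT (ω : Om) : ℕ → ℕ∞
  | 0 => 0
  | k + 1 => sInf {x : ℕ∞ | ∃ m j : ℕ, x = (m : ℕ∞) ∧ ladderT ω k = (j : ℕ∞) ∧
      j < m ∧ Sw ω (j : ℤ) ≤ Sw ω (m : ℤ)}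

/-- `T^{-1}(n) = min{k ≥ 0 : T(k) ≥ n}`. -/
def Tinv (ω : Om) (n : ℕ) : ℕ := sInf {k : ℕ | (n : ℕ∞) ≤ ladderT ω k}

/-- `T̃^{-1}(n) = max{k ≥ 0 : T(k) ≤ n}`. -/
def tildeTinv (ω : Om) (n : ℕ) : ℕ := sSup {k : ℕ | ladderT ω k ≤ (n : ℕ∞)}

/-- First passage time upward `τ_ℓ = inf{k > 0 : S(k) ≥ ℓ}`. -/
def tauUp (ω : Om) (ℓ : ℤ) : ℕ∞ :=
  sInf {x : ℕ∞ | ∃ k : ℕ, x = (k : ℕ∞) ∧ 0 < k ∧ ℓ ≤ Sw ω (k : ℤ)}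

/-- First hitting time downward `τ⁻_ℓ = inf{k ≥ 0 : S(k) = −ℓ}`. -/
def tauDown (ω : Om) (ℓ : ℤ) : ℕ∞ :=
  sInf {x : ℕ∞ | ∃ k : ℕ, x = (k : ℕ∞) ∧ Sw ω (k : ℤ) = -ℓ}

/-- `τ_ℓ` as a natural number (junk value `0` when infinite). -/
def tauUpN (ω : Om) (ℓ : ℤ) : ℕ := (tauUp ω ℓ).toNat

/-- The undershoot `ζ_ℓ = ℓ − S(τ_ℓ − 1)`. -/
def zetaU (ω : Om) (ℓ : ℤ) : ℤ := ℓ - Sw ω ((tauUpN ω ℓ : ℤ) - 1)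

/-- `μ_ℓ = Υ_{ζ_ℓ}(𝒫_{τ_ℓ − 1})`. -/
def muU (ω : Om) (ℓ : ℤ) : PtM := upsilon (zetaU ω ℓ).toNat (Pc ω ((tauUpN ω ℓ : ℤ) - 1))

/-- `𝒬(k) = μ₀ ∘ θ_{T(k−1)}`. -/
def Qcal (ω : Om) (k : ℕ) : PtM := muU (theta ((ladderT ω (k - 1)).toNat : ℤ) ω) 0

/-- `𝕐(k) = π(𝒬(k))`. -/
def Ybb (ω : Om) (k : ℕ) : ℝ≥0 := piM (Qcal ω k)

/-- The backward maximum `L(m) = max_{0 ≤ k ≤ m} S(−k)`. -/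
def Lmax (ω : Om) (m : ℕ) : ℤ :=
  Finset.sup' (Finset.range (m + 1)) Finset.nonempty_range_add_one (fun k => Sw ω (-(k : ℤ)))

/-- The ancestor set `𝒜(n) = {n − T(k)∘ϑ^n : k ≥ 0}` (only finite ladder times). -/
def Aset (ω : Om) (n : ℕ) : Set ℤ :=
  {a | ∃ k j : ℕ, ladderT (dual (n : ℤ) ω) k = (j : ℕ∞) ∧ a = (n : ℤ) - (j : ℤ)}

/-- `mrca(m,n) = max(𝒜(m) ∩ 𝒜(n))`. -/
def mrcaZ (ω : Om) (m n : ℕ) : ℤ := sSup (Aset ω m ∩ Aset ω n)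

/-- `χ(m,k) = inf{j ≥ m+1 : S(j) = S(m+1) − k}`. -/
def chiT (ω : Om) (m k : ℕ) : ℕ∞ :=
  sInf {x : ℕ∞ | ∃ j : ℕ, x = (j : ℕ∞) ∧ m + 1 ≤ j ∧
    Sw ω (j : ℤ) = Sw ω ((m : ℤ) + 1) - (k : ℤ)}

/-- `χ(m) = inf{j ≥ m+1 : S(j) = S(m) − 1}`. -/
def chiF (ω : Om) (m : ℕ) : ℕ∞ :=
  sInf {x : ℕ∞ | ∃ j : ℕ, x = (j : ℕ∞) ∧ m + 1 ≤ j ∧ Sw ω (j : ℤ) = Sw ω (m : ℤ) - 1}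

/-- The functional `D_ℓ(𝕊₀^m)` of the spine, expressed through the dual walk:
`D_ℓ = (Σ_{i : 0 < T(i) ≤ min(τ_ℓ, m)} 𝕐(i) − 1_{τ_ℓ ≤ m} π(μ_ℓ)) ∘ ϑ^m`, with `D_0 ≡ 0`. -/
def Dfun (ω : Om) (m : ℕ) (ℓ : ℤ) : ℝ :=
  if ℓ < 1 then 0 else
    (∑ i ∈ (Finset.Icc 1 m).filter
        (fun i => 0 < ladderT (dual (m : ℤ) ω) i ∧
          ladderT (dual (m : ℤ) ω) i ≤ min (tauUp (dual (m : ℤ) ω) ℓ) (m : ℕ∞)),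
      (Ybb (dual (m : ℤ) ω) i : ℝ))
    - (if tauUp (dual (m : ℤ) ω) ℓ ≤ (m : ℕ∞) then (piM (muU (dual (m : ℤ) ω) ℓ) : ℝ) else 0)

/-- `K_j = 2𝒱(j−1) − ℍ(j)`. -/
def Kt (ω : Om) (j : ℕ) : ℝ := 2 * ∑ k ∈ Finset.range j, (Vc ω (k : ℤ) : ℝ) - (Hchr ω j : ℝ)

/-- The chronological contour process: on `[K_n, K_{n+1}]` it increases at rate `+1` from
`ℍ(n)` up to `ℍ(n) + V_n` and then decreases at rate `−1` down to `ℍ(n+1)`. -/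
def contour (ω : Om) (t : ℝ) : ℝ :=
  let n := sSup {j : ℕ | Kt ω j ≤ t}
  min ((Hchr ω n : ℝ) + (t - Kt ω n)) ((Hchr ω (n + 1) : ℝ) + (Kt ω (n + 1) - t))


/-!
Every weak ascending ladder epoch is a weak record time of `S` (a time `m` with `S(i) ≤ S(m)` for
all `i ≤ m`), and `T(k+1)` is the first record time after `T(k)`; hence `T(T⁻¹(n))` is the first
record time at or after `n`. If `L(n)∘θ_n > 0`, then `S(n)` lies strictly below
`M = max_{k ≤ n} S(k)`, so `n` is not a record, and the first record time after `n` is the first time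
after `n` at which `S` climbs back to `M`, which is `n + τ_{M - S(n)}∘θ_n`.
-/

def firstNat (P : ℕ → Prop) : ℕ∞ := sInf {x : ℕ∞ | ∃ k : ℕ, x = (k : ℕ∞) ∧ P k}

section firstNat

variable {P : ℕ → Prop}

theorem firstNat_le {k : ℕ} (h : P k) : firstNat P ≤ k :=
  sInf_le ⟨k, rfl, h⟩

theorem le_firstNat {x : ℕ∞} (h : ∀ k, P k → x ≤ k) : x ≤ firstNat P :=
  le_sInf <| by rintro _ ⟨k, rfl, hk⟩; exact h k hk

theorem not_of_lt_firstNat {k : ℕ} (h : (k : ℕ∞) < firstNat P) : ¬ P k :=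
  fun hk => (firstNat_le hk).not_gt h

theorem firstNat_spec {k : ℕ} (h : firstNat P = k) : P k := by
  have hne : {x : ℕ∞ | ∃ k : ℕ, x = (k : ℕ∞) ∧ P k}.Nonempty := by
    by_contra hemp
    rw [Set.not_nonempty_iff_eq_empty] at hemp
    simp [firstNat, hemp] at h
  obtain ⟨j, hj, hPj⟩ := csInf_mem hne
  rwa [← Nat.cast_inj.mp (hj.symm.trans h)]

theorem firstNat_eq_top_or : firstNat P = ⊤ ∨ ∃ k : ℕ, firstNat P = k ∧ P k := by
  rcases eq_or_ne (firstNat P) ⊤ with h | h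
  · exact .inl h
  · obtain ⟨k, hk⟩ := ENat.ne_top_iff_exists.mp h
    exact .inr ⟨k, hk.symm, firstNat_spec hk.symm⟩

theorem coe_add_firstNat (n : ℕ) :
    (n : ℕ∞) + firstNat (fun k => 0 < k ∧ P (n + k)) = firstNat (fun m => n < m ∧ P m) := by
  apply le_antisymm
  · refine le_firstNat fun m ⟨hnm, hm⟩ => ?_
    have : firstNat (fun k => 0 < k ∧ P (n + k)) ≤ (m - n : ℕ) :=
      firstNat_le ⟨by omega, by rwa [Nat.add_sub_cancel' hnm.le]⟩
    calc (n : ℕ∞) + firstNat (fun k => 0 < k ∧ P (n + k)) ≤ n + (m - n : ℕ) := by gcongr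
      _ = m := by rw [← Nat.cast_add, Nat.add_sub_cancel' hnm.le]
  · obtain htop | ⟨k, hk, hk0, hPk⟩ := firstNat_eq_top_or (P := fun k => 0 < k ∧ P (n + k))
    · simp [htop]
    · rw [hk, ← Nat.cast_add]
      exact firstNat_le ⟨by omega, hPk⟩

end firstNat

section Walk

variable (ω : Om)

theorem Sw_zero : Sw ω 0 = 0 := by simp [Sw]

theorem Sw_natCast (k : ℕ) :
    Sw ω k = ∑ i ∈ Finset.range k, ((Multiset.card (Pc ω i) : ℤ) - 1) := by
  simp [Sw]

theorem Sw_neg_natCast (k : ℕ) :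
    Sw ω (-k) = -∑ i ∈ Finset.range k, ((Multiset.card (Pc ω (-(i : ℤ) - 1)) : ℤ) - 1) := by
  rcases k with _ | k
  · simp [Sw]
  · rw [Sw, if_neg (by omega), neg_neg, Int.toNat_natCast]

theorem Sw_add_one (x : ℤ) : Sw ω (x + 1) = Sw ω x + ((Multiset.card (Pc ω x) : ℤ) - 1) := by
  have hnat (k : ℕ) : Sw ω (k + 1) = Sw ω k + ((Multiset.card (Pc ω k) : ℤ) - 1) := by
    rw [← Nat.cast_add_one, Sw_natCast, Sw_natCast, Finset.sum_range_succ]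
  obtain ⟨k, rfl | rfl⟩ := Int.eq_nat_or_neg x
  · exact hnat k
  · rcases k with _ | k
    · simpa using hnat 0
    · rw [show -((k + 1 : ℕ) : ℤ) + 1 = -(k : ℤ) by omega, Sw_neg_natCast,
        Sw_neg_natCast, Finset.sum_range_succ]
      push_cast
      rw [show -((k : ℤ) + 1) = -k - 1 by ring]
      ring

theorem Sw_theta (n x : ℤ) : Sw (theta n ω) x = Sw ω (n + x) - Sw ω n := by
  induction x using Int.induction_on with
  | zero => simp [Sw_zero]
  | succ i ih =>
    rw [Sw_add_one, ih, ← add_assoc, Sw_add_one]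
    simp only [Pc, theta]
    ring
  | pred i ih =>
    have hθ := Sw_add_one (theta n ω) (-i - 1)
    have hω := Sw_add_one ω (n + (-i - 1))
    rw [sub_add_cancel] at hθ
    rw [add_assoc, sub_add_cancel] at hω
    simp only [Pc, theta] at hθ hω
    linarith

end Walk

theorem isGreatest_Lmax_theta (ω : Om) (n : ℕ) :
    IsGreatest ((fun i : ℕ => Sw ω (i : ℤ)) '' Set.Iic n) (Sw ω n + Lmax (theta n ω) n) := by
  constructor
  · obtain ⟨k, hk, hkmax⟩ := Finset.exists_mem_eq_sup' Finset.nonempty_range_add_one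
      (fun k : ℕ => Sw (theta n ω) (-(k : ℤ)))
    have hkn : k ≤ n := Nat.lt_succ_iff.mp (Finset.mem_range.mp hk)
    refine ⟨n - k, Nat.sub_le n k, ?_⟩
    show Sw ω ((n - k : ℕ) : ℤ) = _
    rw [Lmax, hkmax, Sw_theta, Nat.cast_sub hkn, add_sub_cancel, sub_eq_add_neg]
  · rintro _ ⟨i, hi, rfl⟩
    have hle := Finset.le_sup' (fun k : ℕ => Sw (theta n ω) (-(k : ℤ)))
      (Finset.mem_range.mpr (by omega : n - i < n + 1))
    rw [Sw_theta, Nat.cast_sub (Set.mem_Iic.mp hi)] at hle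
    simp only [neg_sub, add_sub_cancel] at hle
    simp only [Lmax]
    omega

def IsWeakRecord (ω : Om) (m : ℕ) : Prop := ∀ i ≤ m, Sw ω (i : ℤ) ≤ Sw ω (m : ℤ)

theorem IsWeakRecord.isGreatest {ω : Om} {m : ℕ} (h : IsWeakRecord ω m) :
    IsGreatest ((fun i : ℕ => Sw ω (i : ℤ)) '' Set.Iic m) (Sw ω (m : ℤ)) :=
  ⟨⟨m, Set.mem_Iic.2 le_rfl, rfl⟩, by rintro _ ⟨i, hi, rfl⟩; exact h i hi⟩

section Records

variable {ω : Om} {j : ℕ} {M : ℤ}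

theorem isWeakRecord_of_firstNat_eq
    (hM : M ∈ upperBounds ((fun i : ℕ => Sw ω (i : ℤ)) '' Set.Iic j)) {m : ℕ} (hm : firstNat (fun m => j < m ∧ M ≤ Sw ω (m : ℤ)) = m) : IsWeakRecord ω m := by
  obtain ⟨hjm, hMm⟩ := firstNat_spec hm
  intro i hi
  rcases le_or_gt i j with hij | hji
  · exact (hM ⟨i, hij, rfl⟩).trans hMm
  rcases hi.eq_or_lt with rfl | him
  · exact le_rfl
  have hi_lt : (i : ℕ∞) < firstNat (fun m => j < m ∧ M ≤ Sw ω (m : ℤ)) := by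
    rw [hm]; exact_mod_cast him
  have hiM : Sw ω (i : ℤ) < M := not_le.mp fun hMi => not_of_lt_firstNat hi_lt ⟨hji, hMi⟩
  exact hiM.le.trans hMm

theorem firstNat_le_Sw_eq_firstNat_isWeakRecord
    (hM : IsGreatest ((fun i : ℕ => Sw ω (i : ℤ)) '' Set.Iic j) M) :
    firstNat (fun m => j < m ∧ M ≤ Sw ω (m : ℤ)) = firstNat (fun m => j < m ∧ IsWeakRecord ω m) := by
  obtain ⟨⟨i, hij, hiM⟩, hub⟩ := hM
  apply le_antisymm
  · refine le_firstNat fun m ⟨hjm, hrec⟩ => firstNat_le ⟨hjm, ?_⟩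
    exact hiM ▸ hrec i (hij.trans hjm.le)
  · obtain htop | ⟨m, hm, hjm, -⟩ := firstNat_eq_top_or (P := fun m => j < m ∧ M ≤ Sw ω (m : ℤ))
    · simp [htop]
    · rw [hm]
      exact firstNat_le ⟨hjm, isWeakRecord_of_firstNat_eq hub hm⟩

end Records

section Ladder

variable {ω : Om} {k j : ℕ}

theorem ladderT_succ_of_eq (h : ladderT ω k = j) :
    ladderT ω (k + 1) = firstNat (fun m => j < m ∧ Sw ω (j : ℤ) ≤ Sw ω (m : ℤ)) := by
  simp only [ladderT, firstNat, h, Nat.cast_inj]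
  congr 1
  ext x
  constructor
  · rintro ⟨m, _, rfl, rfl, hm⟩
    exact ⟨m, rfl, hm⟩
  · rintro ⟨m, rfl, hm⟩
    exact ⟨m, j, rfl, rfl, hm⟩

theorem ladderT_succ_of_eq_top (h : ladderT ω k = ⊤) : ladderT ω (k + 1) = ⊤ := by
  simp [ladderT, h]

theorem isWeakRecord_of_ladderT_eq : ∀ {k j : ℕ}, ladderT ω k = j → IsWeakRecord ω j
  | 0, j, h => by
    obtain rfl : j = 0 := by exact_mod_cast (h.symm.trans rfl : (j : ℕ∞) = 0)
    intro i hi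
    rw [Nat.le_zero.mp hi]
  | k + 1, m, h => by
    cases hk : ladderT ω k using ENat.recTopCoe with
    | top => simp [ladderT_succ_of_eq_top hk] at h
    | coe j =>
      rw [ladderT_succ_of_eq hk] at h
      exact isWeakRecord_of_firstNat_eq (isWeakRecord_of_ladderT_eq hk).isGreatest.2 h

theorem ladderT_succ_eq_firstNat_isWeakRecord (h : ladderT ω k = j) :
    ladderT ω (k + 1) = firstNat (fun m => j < m ∧ IsWeakRecord ω m) := by
  rw [ladderT_succ_of_eq h,
    firstNat_le_Sw_eq_firstNat_isWeakRecord (isWeakRecord_of_ladderT_eq h).isGreatest]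

theorem le_ladderT : ∀ k : ℕ, (k : ℕ∞) ≤ ladderT ω k
  | 0 => le_rfl
  | k + 1 => by
    cases hk : ladderT ω k using ENat.recTopCoe with
    | top => simp [ladderT_succ_of_eq_top hk]
    | coe j =>
      have hkj : k ≤ j := by exact_mod_cast hk ▸ le_ladderT k
      rw [ladderT_succ_of_eq hk]
      exact le_firstNat fun m ⟨hjm, _⟩ => by exact_mod_cast (by omega : k + 1 ≤ m)

end Ladder

theorem ladderT_Tinv (ω : Om) (n : ℕ) :
    ladderT ω (Tinv ω n) = firstNat (fun m => n ≤ m ∧ IsWeakRecord ω m) := by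
  have hn : (n : ℕ∞) ≤ ladderT ω (Tinv ω n) :=
    Nat.sInf_mem (s := {k | (n : ℕ∞) ≤ ladderT ω k}) ⟨n, le_ladderT n⟩
  apply le_antisymm
  · refine le_firstNat fun r ⟨hnr, hr⟩ => ?_
    rcases hK : Tinv ω n with _ | k
    · exact zero_le
    · have hk : ladderT ω k < n :=
        not_le.mp (Nat.notMem_of_lt_sInf (hK ▸ Nat.lt_succ_self k : k < Tinv ω n))
      obtain ⟨j, hj⟩ := ENat.ne_top_iff_exists.mp (hk.trans (ENat.natCast_lt_top n)).ne
      have hjn : j < n := by exact_mod_cast hj ▸ hk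
      rw [ladderT_succ_eq_firstNat_isWeakRecord hj.symm]
      exact firstNat_le ⟨by omega, hr⟩
  · cases hK : ladderT ω (Tinv ω n) using ENat.recTopCoe with
    | top => exact le_top
    | coe j =>
      rw [hK] at hn
      exact firstNat_le ⟨by exact_mod_cast hn, isWeakRecord_of_ladderT_eq hK⟩

theorem stmt9 (ω : Om) (n : ℕ) (hL : 0 < Lmax (theta (n : ℤ) ω) n) :
    ladderT ω (Tinv ω n) = (n : ℕ∞) + tauUp (theta (n : ℤ) ω) (Lmax (theta (n : ℤ) ω) n) := by
  have hmax := isGreatest_Lmax_theta ω n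
  have hn : ¬ IsWeakRecord ω n := fun hrec => by
    obtain ⟨i, hi, hiM⟩ := hmax.1
    have := hrec i hi
    simp only at hiM
    omega
  have htau : tauUp (theta n ω) (Lmax (theta n ω) n) = firstNat (fun k =>
      0 < k ∧ Sw ω n + Lmax (theta n ω) n ≤ Sw ω ((n + k : ℕ) : ℤ)) := by
    simp only [tauUp, firstNat, Sw_theta, Nat.cast_add, le_sub_iff_add_le']
  calc ladderT ω (Tinv ω n) = firstNat (fun m => n < m ∧ IsWeakRecord ω m) := by
        rw [ladderT_Tinv]
        congr 1
        ext m
        exact ⟨fun ⟨hnm, hm⟩ => ⟨hnm.lt_of_ne (by rintro rfl; exact hn hm), hm⟩,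
          fun ⟨hnm, hm⟩ => ⟨hnm.le, hm⟩⟩
    _ = firstNat (fun m => n < m ∧ Sw ω n + Lmax (theta n ω) n ≤ Sw ω (m : ℤ)) :=
        (firstNat_le_Sw_eq_firstNat_isWeakRecord hmax).symm
    _ = n + tauUp (theta n ω) (Lmax (theta n ω) n) := by
        rw [htau]
        exact (coe_add_firstNat n).symm

end
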